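/- arXiv:2105.09797 — 2 statements merged into one kernel-verified Lean document; each statement's English description precedes it below -/
import Mathlib

section
/- For all finite graphs G and H, γ(G ⊠ H) ≤ γ(G)·γ(H) and Γ(G ⊠ H) ≥ Γ(G)·Γ(H), where ⊠ denotes the strong product. -/
open SimpleGraph

variable {V : Type*}

/-- Closed neighborhood of a vertex. -/
def closedNbhd (G : SimpleGraph V) (v : V) : Set V := insert v (G.neighborSet v)

/-- Closed neighborhood of a set of vertices. -/
def closedNbhdSet (G : SimpleGraph V) (A : Set V) : Set V := ⋃ a ∈ A, closedNbhd G a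

/-- `D` is a dominating set of `G`. -/
def IsDomSet (G : SimpleGraph V) (D : Set V) : Prop :=
  ∀ v, ∃ u ∈ D, v ∈ closedNbhd G u

/-- `D` is a minimal dominating set of `G`. -/
def IsMinimalDomSet (G : SimpleGraph V) (D : Set V) : Prop :=
  IsDomSet G D ∧ ∀ D' ⊆ D, IsDomSet G D' → D' = D

/-- The domination number `γ`. -/
noncomputable def domNum (G : SimpleGraph V) : ℕ :=
  sInf {n | ∃ D : Set V, IsDomSet G D ∧ D.ncard = n}

/-- The upper domination number `Γ`. -/
noncomputable def upperDomNum (G : SimpleGraph V) : ℕ :=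
  sSup {n | ∃ D : Set V, IsMinimalDomSet G D ∧ D.ncard = n}

/-- A graph is well-dominated if `γ = Γ`. -/
def WellDominated (G : SimpleGraph V) : Prop := domNum G = upperDomNum G

/-- `A` is an independent set of `G`. -/
def IsIndep (G : SimpleGraph V) (A : Set V) : Prop :=
  ∀ u ∈ A, ∀ v ∈ A, ¬ G.Adj u v

/-- `A` is a maximal independent set of `G`. -/
def IsMaxIndep (G : SimpleGraph V) (A : Set V) : Prop :=
  IsIndep G A ∧ ∀ B, IsIndep G B → A ⊆ B → B = A

/-- The independence number `α`. -/
noncomputable def indepNum (G : SimpleGraph V) : ℕ :=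
  sSup {n | ∃ A : Set V, IsIndep G A ∧ A.ncard = n}

/-- The strong product of two graphs. -/
def strongProd {α β : Type*} (G : SimpleGraph α) (H : SimpleGraph β) :
    SimpleGraph (α × β) where
  Adj x y := x ≠ y ∧ (x.1 = y.1 ∨ G.Adj x.1 y.1) ∧ (x.2 = y.2 ∨ H.Adj x.2 y.2)
  symm := by
    constructor
    rintro x y ⟨h1, h2, h3⟩
    refine ⟨h1.symm, ?_, ?_⟩
    · cases h2 with
      | inl h => exact Or.inl h.symm
      | inr h => exact Or.inr h.symm
    · cases h3 with
      | inl h => exact Or.inl h.symm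
      | inr h => exact Or.inr h.symm
  loopless := by constructor; rintro x ⟨h1, _⟩; exact h1 rfl

/-- The direct (tensor) product of two graphs. -/
def tensorProd {α β : Type*} (G : SimpleGraph α) (H : SimpleGraph β) :
    SimpleGraph (α × β) where
  Adj x y := G.Adj x.1 y.1 ∧ H.Adj x.2 y.2
  symm := ⟨fun _ _ h => ⟨h.1.symm, h.2.symm⟩⟩
  loopless := ⟨fun _ h => G.irrefl h.1⟩

/-- The corona `G ⊙ K₁`. -/
def corona {α : Type*} (G : SimpleGraph α) : SimpleGraph (α ⊕ α) :=
  SimpleGraph.fromRel (fun x y =>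
    match x, y with
    | Sum.inl u, Sum.inl v => G.Adj u v
    | Sum.inl u, Sum.inr v => u = v
    | _, _ => False)

/-- The private neighborhood `pn[u,D] = N[u] - N[D - {u}]`. -/
def privateNbhd (G : SimpleGraph V) (D : Set V) (u : V) : Set V :=
  {x | x ∈ closedNbhd G u ∧ ∀ d ∈ D, d ≠ u → x ∉ closedNbhd G d}

/-- A set `D` is open irredundant if every vertex of `D` has an external
private neighbor. -/
def IsOpenIrred (G : SimpleGraph V) (D : Set V) : Prop :=
  ∀ u ∈ D, ∃ x ∈ G.neighborSet u, ∀ d ∈ D, d ≠ u → x ∉ closedNbhd G d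


/-! In `G ⊠ H` the closed neighbourhood of `(u, v)` is `N[u] ×ˢ N[v]`. Hence a product of
dominating sets dominates, and a product of minimal dominating sets is minimal: if `x` is a
private neighbour of `u` and `y` one of `v`, then `(x, y)` is dominated by `(u, v)` alone. Taking
minimum (resp. maximum) sets in the factors gives both inequalities. -/

section Domination

variable {G : SimpleGraph V} {D : Set V} {u x : V}

lemma mem_closedNbhd : x ∈ closedNbhd G u ↔ x = u ∨ G.Adj u x := by
  simp [closedNbhd, SimpleGraph.neighborSet]

lemma isDomSet_univ (G : SimpleGraph V) : IsDomSet G Set.univ :=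
  fun v => ⟨v, Set.mem_univ v, Set.mem_insert v _⟩

lemma domNum_le_ncard (hD : IsDomSet G D) : domNum G ≤ D.ncard :=
  Nat.sInf_le ⟨D, hD, rfl⟩

lemma exists_isDomSet_ncard_eq_domNum (G : SimpleGraph V) :
    ∃ D, IsDomSet G D ∧ D.ncard = domNum G :=
  Nat.sInf_mem (s := {n | ∃ D : Set V, IsDomSet G D ∧ D.ncard = n})
    ⟨_, Set.univ, isDomSet_univ G, rfl⟩

lemma exists_isMinimalDomSet [Finite V] (G : SimpleGraph V) : ∃ D, IsMinimalDomSet G D := by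
  obtain ⟨D, hD, hcard⟩ := exists_isDomSet_ncard_eq_domNum G
  exact ⟨D, hD, fun D' hD'D hD' =>
    Set.eq_of_subset_of_ncard_le hD'D (hcard.trans_le (domNum_le_ncard hD'))⟩

lemma bddAbove_ncard_minimalDomSet [Finite V] (G : SimpleGraph V) :
    BddAbove {n | ∃ D : Set V, IsMinimalDomSet G D ∧ D.ncard = n} :=
  ⟨Nat.card V, by rintro _ ⟨D, -, rfl⟩; exact Set.ncard_le_card D⟩

lemma ncard_le_upperDomNum [Finite V] (hD : IsMinimalDomSet G D) : D.ncard ≤ upperDomNum G :=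
  le_csSup (bddAbove_ncard_minimalDomSet G) ⟨D, hD, rfl⟩

lemma exists_isMinimalDomSet_ncard_eq_upperDomNum [Finite V] (G : SimpleGraph V) :
    ∃ D, IsMinimalDomSet G D ∧ D.ncard = upperDomNum G := by
  obtain ⟨D, hD⟩ := exists_isMinimalDomSet G
  exact Nat.sSup_mem (s := {n | ∃ D : Set V, IsMinimalDomSet G D ∧ D.ncard = n})
    ⟨_, D, hD, rfl⟩ (bddAbove_ncard_minimalDomSet G)

lemma IsMinimalDomSet.privateNbhd_nonempty (hD : IsMinimalDomSet G D) (hu : u ∈ D) :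
    (privateNbhd G D u).Nonempty := by
  have hnot : ¬ IsDomSet G (D \ {u}) := fun h =>
    (hD.2 _ Set.sdiff_subset h ▸ hu).2 rfl
  obtain ⟨x, hx⟩ : ∃ x, ∀ d ∈ D \ {u}, x ∉ closedNbhd G d := by
    simpa [IsDomSet] using hnot
  obtain ⟨d, hd, hxd⟩ := hD.1 x
  obtain rfl : d = u := by_contra fun hdu => hx d ⟨hd, hdu⟩ hxd
  exact ⟨x, hxd, fun d' hd' hd'u => hx d' ⟨hd', hd'u⟩⟩

lemma eq_of_mem_privateNbhd {d : V} (hx : x ∈ privateNbhd G D u) (hd : d ∈ D)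
    (hxd : x ∈ closedNbhd G d) : d = u :=
  by_contra fun hdu => hx.2 d hd hdu hxd

end Domination

section StrongProduct

variable {α β : Type*} {G : SimpleGraph α} {H : SimpleGraph β}

lemma mem_closedNbhd_strongProd {p q : α × β} :
    q ∈ closedNbhd (strongProd G H) p ↔ q.1 ∈ closedNbhd G p.1 ∧ q.2 ∈ closedNbhd H p.2 := by
  by_cases hqp : q = p
  · simp [hqp, closedNbhd]
  · have h₁ : q.1 = p.1 ↔ p.1 = q.1 := eq_comm
    have h₂ : q.2 = p.2 ↔ p.2 = q.2 := eq_comm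
    simp [mem_closedNbhd, strongProd, hqp, Ne.symm hqp, h₁, h₂]

lemma IsDomSet.prod {D₁ : Set α} {D₂ : Set β} (h₁ : IsDomSet G D₁) (h₂ : IsDomSet H D₂) :
    IsDomSet (strongProd G H) (D₁ ×ˢ D₂) := by
  rintro ⟨x, y⟩
  obtain ⟨u, hu, hxu⟩ := h₁ x
  obtain ⟨v, hv, hyv⟩ := h₂ y
  exact ⟨(u, v), ⟨hu, hv⟩, mem_closedNbhd_strongProd.2 ⟨hxu, hyv⟩⟩

lemma IsMinimalDomSet.prod {D₁ : Set α} {D₂ : Set β}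
    (h₁ : IsMinimalDomSet G D₁) (h₂ : IsMinimalDomSet H D₂) :
    IsMinimalDomSet (strongProd G H) (D₁ ×ˢ D₂) := by
  refine ⟨h₁.1.prod h₂.1, fun D' hD'D hD' => hD'D.antisymm ?_⟩
  rintro ⟨u, v⟩ ⟨hu, hv⟩
  obtain ⟨x, hx⟩ := h₁.privateNbhd_nonempty hu
  obtain ⟨y, hy⟩ := h₂.privateNbhd_nonempty hv
  obtain ⟨⟨u', v'⟩, hu'v', hxy⟩ := hD' (x, y)
  obtain ⟨hxu', hyv'⟩ := mem_closedNbhd_strongProd.1 hxy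
  obtain ⟨hu', hv'⟩ := hD'D hu'v'
  obtain rfl : u' = u := eq_of_mem_privateNbhd hx hu' hxu'
  obtain rfl : v' = v := eq_of_mem_privateNbhd hy hv' hyv'
  exact hu'v'

end StrongProduct

/-- For finite graphs, `γ(G ⊠ H) ≤ γ(G)γ(H)` and `Γ(G ⊠ H) ≥ Γ(G)Γ(H)`. -/
theorem stmt_1 {α β : Type*} [Fintype α] [Fintype β]
    (G : SimpleGraph α) (H : SimpleGraph β) :
    domNum (strongProd G H) ≤ domNum G * domNum H ∧
    upperDomNum G * upperDomNum H ≤ upperDomNum (strongProd G H) := by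
  obtain ⟨D₁, hD₁, hγ₁⟩ := exists_isDomSet_ncard_eq_domNum G
  obtain ⟨D₂, hD₂, hγ₂⟩ := exists_isDomSet_ncard_eq_domNum H
  obtain ⟨M₁, hM₁, hΓ₁⟩ := exists_isMinimalDomSet_ncard_eq_upperDomNum G
  obtain ⟨M₂, hM₂, hΓ₂⟩ := exists_isMinimalDomSet_ncard_eq_upperDomNum H
  constructor
  · calc domNum (strongProd G H) ≤ (D₁ ×ˢ D₂).ncard := domNum_le_ncard (hD₁.prod hD₂)
      _ = domNum G * domNum H := by rw [Set.ncard_prod, hγ₁, hγ₂]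
  · calc upperDomNum G * upperDomNum H = (M₁ ×ˢ M₂).ncard := by rw [Set.ncard_prod, hΓ₁, hΓ₂]
      _ ≤ upperDomNum (strongProd G H) := ncard_le_upperDomNum (hM₁.prod hM₂)
end

section
/- If D is an open irredundant dominating set of a graph G, then D × V(H) is an open irredundant, minimal dominating set of the Cartesian product G □ H, for any graph H. -/
open SimpleGraph

variable {V : Type*}

/-! An open irredundant dominating set is minimal: removing `u` leaves its external private
neighbour undominated. For `G □ H`, domination lifts fibrewise, and an external private
neighbour `x` of `u` in `G` gives the external private neighbour `(x, h)` of `(u, h)`: a closed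
neighbourhood in `G □ H` projects into a closed neighbourhood in `G`, and from `(u, h')` with
`h' ≠ h` one only reaches vertices with first coordinate `u ≠ x`. -/

theorem mem_closedNbhd_iff {G : SimpleGraph V} {x v : V} :
    x ∈ closedNbhd G v ↔ x = v ∨ G.Adj v x :=
  Iff.rfl

theorem IsOpenIrred.isMinimalDomSet {G : SimpleGraph V} {D : Set V}
    (hirr : IsOpenIrred G D) (hdom : IsDomSet G D) : IsMinimalDomSet G D := by
  refine ⟨hdom, fun D' hsub hdom' => hsub.antisymm fun u hu => ?_⟩
  obtain ⟨x, -, hpriv⟩ := hirr u hu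
  obtain ⟨p, hp, hxp⟩ := hdom' x
  by_contra hu'
  exact hpriv p (hsub hp) (ne_of_mem_of_not_mem hp hu') hxp

section BoxProd

variable {α β : Type*} {G : SimpleGraph α} {H : SimpleGraph β}

theorem mem_closedNbhd_boxProd_of_fst {x u : α} (h : β) (hx : x ∈ closedNbhd G u) :
    (x, h) ∈ closedNbhd (G □ H) (u, h) := by
  rcases mem_closedNbhd_iff.1 hx with rfl | hadj
  · exact Set.mem_insert _ _
  · exact Or.inr (boxProd_adj.2 (Or.inl ⟨hadj, rfl⟩))

theorem fst_mem_closedNbhd_of_mem_boxProd {p q : α × β} (hp : p ∈ closedNbhd (G □ H) q) :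
    p.1 ∈ closedNbhd G q.1 := by
  rcases mem_closedNbhd_iff.1 hp with rfl | (⟨hadj, -⟩ | ⟨-, heq⟩)
  · exact Set.mem_insert _ _
  · exact Or.inr hadj
  · exact Or.inl heq.symm

theorem fst_eq_of_mem_closedNbhd_boxProd {p q : α × β} (hp : p ∈ closedNbhd (G □ H) q)
    (hne : p.2 ≠ q.2) : p.1 = q.1 := by
  rcases mem_closedNbhd_iff.1 hp with rfl | (⟨-, heq⟩ | ⟨-, heq⟩)
  · rfl
  · exact absurd heq.symm hne
  · exact heq.symm

variable {D : Set α}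

theorem IsDomSet.boxProd_prod_univ (hdom : IsDomSet G D) (H : SimpleGraph β) :
    IsDomSet (G □ H) (D ×ˢ (Set.univ : Set β)) := by
  rintro ⟨g, h⟩
  obtain ⟨u, hu, hg⟩ := hdom g
  exact ⟨(u, h), ⟨hu, trivial⟩, mem_closedNbhd_boxProd_of_fst h hg⟩

theorem IsOpenIrred.boxProd_prod_univ (hirr : IsOpenIrred G D) (H : SimpleGraph β) :
    IsOpenIrred (G □ H) (D ×ˢ (Set.univ : Set β)) := by
  rintro ⟨u, h⟩ ⟨hu, -⟩
  obtain ⟨x, hx, hpriv⟩ := hirr u hu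
  refine ⟨(x, h), boxProd_adj.2 (Or.inl ⟨hx, rfl⟩), ?_⟩
  rintro ⟨d, h'⟩ ⟨hd, -⟩ hne hmem
  by_cases hdu : d = u
  · subst hdu
    have hh : h ≠ h' := fun e => hne (by rw [e])
    exact (mem_neighborSet _ _ _ |>.1 hx).ne (fst_eq_of_mem_closedNbhd_boxProd hmem hh).symm
  · exact hpriv d hd hdu (fst_mem_closedNbhd_of_mem_boxProd hmem)

end BoxProd

/-- If `D` is an open irredundant dominating set of `G`, then `D × V(H)` is an
open irredundant minimal dominating set of `G □ H`, for any graph `H`. -/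
theorem stmt_11 {α β : Type*} (G : SimpleGraph α) (H : SimpleGraph β)
    (D : Set α) (hdom : IsDomSet G D) (hirr : IsOpenIrred G D) :
    IsOpenIrred (G □ H) (D ×ˢ (Set.univ : Set β)) ∧
    IsMinimalDomSet (G □ H) (D ×ˢ (Set.univ : Set β)) :=
  ⟨hirr.boxProd_prod_univ H,
    (hirr.boxProd_prod_univ H).isMinimalDomSet (hdom.boxProd_prod_univ H)⟩
end
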